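/- arXiv:1406.1796 — 2 statements merged into one kernel-verified Lean document; each statement's English description precedes it below -/
import Mathlib

section
/- Define bitsize : ℕ → ℕ by bitsize(0) = 0 and, for n > 0 with c'(n) = (i,j), bitsize(n) = 1 + i + bitsize(j). Then for every natural number n, bitsize(n) equals the number of binary digits of n (Nat.size n), i.e., the recursive run-length-based size function computes the length of the binary representation. -/
/-- The pairing function `c`. -/
def c (i j : ℕ) : ℕ := if Odd j then 2 ^ (i + 1) * j else 2 ^ (i + 1) * (j + 1) - 1

/-- The inverse of `c` on positive naturals (returns `(0,0)` at `0`). -/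
def c' (n : ℕ) : ℕ × ℕ :=
  (padicValNat 2 (n + n % 2) - 1, (n + n % 2) / 2 ^ padicValNat 2 (n + n % 2) - n % 2)

lemma c'_fst_lt {n : ℕ} (hn : 0 < n) : (c' n).1 < n := by
  have hm : 0 < n + n % 2 := by omega
  have hdvd : (2 : ℕ) ^ padicValNat 2 (n + n % 2) ∣ (n + n % 2) := pow_padicValNat_dvd
  have hle : (2 : ℕ) ^ padicValNat 2 (n + n % 2) ≤ n + n % 2 := Nat.le_of_dvd hm hdvd
  have hlt : padicValNat 2 (n + n % 2) < 2 ^ padicValNat 2 (n + n % 2) := by first | exact Nat.lt_two_pow_self | exact Nat.lt_two_pow_self _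
  simp only [c']
  generalize hv : padicValNat 2 (n + n % 2) = v at *
  generalize hp : (2 : ℕ) ^ v = p at *
  omega

lemma c'_snd_lt {n : ℕ} (hn : 0 < n) : (c' n).2 < n := by
  have hm : 0 < n + n % 2 := by omega
  have h2 : (2 : ℕ) ∣ (n + n % 2) := by omega
  have hv : 1 ≤ padicValNat 2 (n + n % 2) := one_le_padicValNat_of_dvd hm.ne' h2
  have h2le : (2 : ℕ) ≤ 2 ^ padicValNat 2 (n + n % 2) := by
    calc (2:ℕ) = 2 ^ 1 := (pow_one 2).symm
    _ ≤ 2 ^ padicValNat 2 (n + n % 2) := Nat.pow_le_pow_right (by norm_num) hv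
  have hle : (n + n % 2) / 2 ^ padicValNat 2 (n + n % 2) ≤ (n + n % 2) / 2 :=
    Nat.div_le_div_left h2le (by norm_num)
  simp only [c']
  generalize hq : (n + n % 2) / 2 ^ padicValNat 2 (n + n % 2) = q at *
  omega

lemma c'_fst_lt_of_lt {m n : ℕ} (h : m < n) : (c' m).1 < n := by
  rcases Nat.eq_zero_or_pos m with rfl | hm
  · simp [c']; omega
  · exact lt_trans (c'_fst_lt hm) h

lemma c'_snd_lt_of_lt {m n : ℕ} (h : m < n) : (c' m).2 < n := by
  rcases Nat.eq_zero_or_pos m with rfl | hm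
  · simp [c']; omega
  · exact lt_trans (c'_snd_lt hm) h

def bitsize : ℕ → ℕ
  | 0 => 0
  | n + 1 => 1 + (c' (n + 1)).1 + bitsize (c' (n + 1)).2
  decreasing_by
  · exact c'_snd_lt (Nat.succ_pos n)

/-! In binary, `c i j` is `j` followed by `i + 1` zeros when `j` is odd and by `i + 1` ones when
`j` is even, since `2 ^ (i + 1) * (j + 1) - 1 = 2 ^ (i + 1) * j + (2 ^ (i + 1) - 1)`. Either way
`c i j` has exactly `i + 1` more binary digits than `j`, which is the recursion defining `bitsize`. -/

namespace Nat

theorem size_eq_succ_of_two_pow_le_of_lt {n k : ℕ} (h₁ : 2 ^ k ≤ n) (h₂ : n < 2 ^ (k + 1)) :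
    size n = k + 1 :=
  le_antisymm (size_le.2 h₂) (lt_size.2 h₁)

theorem size_two_pow_sub_one (k : ℕ) : size (2 ^ k - 1) = k := by
  rcases k with _ | k
  · rfl
  · have : 0 < 2 ^ k := by positivity
    refine size_eq_succ_of_two_pow_le_of_lt ?_ ?_ <;> rw [pow_succ] <;> omega

theorem size_two_pow_mul_add {k a b : ℕ} (ha : a ≠ 0) (hb : b < 2 ^ k) :
    size (2 ^ k * a + b) = k + size a := by
  have ha_lt : a < 2 ^ size a := lt_size_self a
  have hsize : 0 < size a := size_pos.2 (pos_of_ne_zero ha)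
  have ha_ge : 2 ^ (size a - 1) ≤ a := lt_size.1 (by omega)
  apply le_antisymm
  · refine size_le.2 ?_
    calc 2 ^ k * a + b < 2 ^ k * (a + 1) := by rw [mul_add_one]; omega
      _ ≤ 2 ^ k * 2 ^ size a := Nat.mul_le_mul_left _ ha_lt
      _ = 2 ^ (k + size a) := (pow_add 2 k (size a)).symm
  · suffices k + size a - 1 < size (2 ^ k * a + b) by omega
    refine lt_size.2 ?_
    calc 2 ^ (k + size a - 1) = 2 ^ k * 2 ^ (size a - 1) := by rw [← pow_add]; congr 1; omega
      _ ≤ 2 ^ k * a := Nat.mul_le_mul_left _ ha_ge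
      _ ≤ 2 ^ k * a + b := le_add_right _ _

theorem size_two_pow_mul_add_two_pow_sub_one (k a : ℕ) :
    size (2 ^ k * a + (2 ^ k - 1)) = k + size a := by
  rcases eq_or_ne a 0 with rfl | ha
  · simp [size_two_pow_sub_one]
  · exact size_two_pow_mul_add ha (Nat.sub_lt (by positivity) one_pos)

end Nat

lemma padicValNat_two_pow_mul_of_odd (k : ℕ) {q : ℕ} (hq : Odd q) :
    padicValNat 2 (2 ^ k * q) = k := by
  rw [padicValNat.mul (by positivity) hq.pos.ne', padicValNat.prime_pow,
    padicValNat.eq_zero_of_not_dvd hq.not_two_dvd_nat, add_zero]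

lemma size_c (i j : ℕ) : Nat.size (c i j) = i + 1 + Nat.size j := by
  rw [c]
  split_ifs with hj
  · rw [← add_zero (2 ^ (i + 1) * j), Nat.size_two_pow_mul_add hj.pos.ne' (by positivity)]
  · have : 2 ^ (i + 1) * (j + 1) - 1 = 2 ^ (i + 1) * j + (2 ^ (i + 1) - 1) := by
      have : 0 < 2 ^ (i + 1) := by positivity
      rw [mul_add_one]
      omega
    rw [this, Nat.size_two_pow_mul_add_two_pow_sub_one]

lemma c_c' {n : ℕ} (hn : 0 < n) : c (c' n).1 (c' n).2 = n := by
  obtain ⟨k, q, hq, hm⟩ := Nat.exists_eq_two_pow_mul_odd (n := n + n % 2) (by omega)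
  have hk : 1 ≤ k := by
    rcases k with _ | k
    · rw [pow_zero, one_mul] at hm
      obtain ⟨r, rfl⟩ := hq
      omega
    · omega
  have hc' : c' n = (k - 1, q - n % 2) := by
    simp only [c', hm, padicValNat_two_pow_mul_of_odd k hq,
      Nat.mul_div_cancel_left _ (pow_pos two_pos k)]
  rw [hc', c]
  dsimp only
  rw [Nat.sub_add_cancel hk]
  rcases Nat.mod_two_eq_zero_or_one n with h | h
  · rw [h, Nat.sub_zero, if_pos hq]
    omega
  · have hq' : ¬ Odd (q - 1) := by
      obtain ⟨r, rfl⟩ := hq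
      simp
    rw [h, if_neg hq', Nat.sub_add_cancel hq.pos, ← hm]
    omega

theorem bitsize_eq_size (n : ℕ) : bitsize n = Nat.size n := by
  induction n using Nat.strong_induction_on with
  | _ n ih =>
    rcases n with _ | n
    · simp [bitsize]
    · have hpos : 0 < n + 1 := n.succ_pos
      have hsize := size_c (c' (n + 1)).1 (c' (n + 1)).2
      rw [c_c' hpos] at hsize
      rw [bitsize, ih _ (c'_snd_lt hpos), hsize]
      ring
end

section
/- The Collatz conjecture holds if and only if every syracuse iteration terminates at 0: (for every natural number x ≥ 1 there exists k with collatz^[k](x) = 1) if and only if (for every natural number n there exists k with syracuse^[k](n) = 0). -/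
/-- The Collatz function. -/
def collatz (x : ℕ) : ℕ := if x % 2 = 0 then x / 2 else 3 * x + 1

/-- `tl m = ((m / 2^(ν₂ m)) − 1) / 2`: the encoding of the odd part of `m`. -/
def tl (m : ℕ) : ℕ := (m / 2 ^ padicValNat 2 m - 1) / 2

/-- The syracuse function on the encodings of odd numbers. -/
def syracuse (n : ℕ) : ℕ := tl (3 * n + 2)

/-!
Between two consecutive odd values `2n + 1` and `2 · syracuse n + 1` the Collatz orbit takes
`2 + ν₂(3n + 2)` steps: `2n + 1 ↦ 6n + 4 ↦ 3n + 2`, followed by `ν₂(3n + 2)` halvings. So the two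
orbits hit `1` (resp. its encoding `0`) together. For the direction from Collatz to syracuse one
also needs that, when `n ≠ 0`, the Collatz orbit does not pass through `1` inside such a block
(all values there are even or equal to `2n + 1`), so the hitting time strictly decreases from
block to block.
-/

theorem Function.iterate_sub_apply_of_forall_lt_ne {α : Type*} {f : α → α} {x y : α} {i k : ℕ}
    (hne : ∀ j < i, f^[j] x ≠ y) (hk : f^[k] x = y) : f^[k - i] (f^[i] x) = y := by
  have hik : i ≤ k := by
    by_contra! hlt
    exact hne k hlt hk
  rwa [← Function.iterate_add_apply, Nat.sub_add_cancel hik]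

lemma collatz_of_two_dvd {x : ℕ} (hx : 2 ∣ x) : collatz x = x / 2 := by
  simp [collatz, Nat.mod_eq_zero_of_dvd hx]

lemma collatz_two_mul_add_one (n : ℕ) : collatz (2 * n + 1) = 6 * n + 4 := by
  rw [collatz, if_neg (by omega)]
  ring

lemma collatz_iterate_two_two_mul_add_one (n : ℕ) : collatz^[2] (2 * n + 1) = 3 * n + 2 := by
  rw [Function.iterate_succ_apply', Function.iterate_one, collatz_two_mul_add_one,
    collatz_of_two_dvd (by omega)]
  omega

lemma two_dvd_div_pow_of_lt_padicValNat {m j : ℕ} (hm : m ≠ 0) (hj : j < padicValNat 2 m) :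
    2 ∣ m / 2 ^ j := by
  apply Nat.dvd_div_of_mul_dvd
  rw [← pow_succ, padicValNat_dvd_iff_le hm]
  exact hj

lemma collatz_iterate_of_le_padicValNat {m j : ℕ} (hm : m ≠ 0) (hj : j ≤ padicValNat 2 m) :
    collatz^[j] m = m / 2 ^ j := by
  induction j with
  | zero => simp
  | succ j ih =>
    rw [Function.iterate_succ_apply', ih (by omega),
      collatz_of_two_dvd (two_dvd_div_pow_of_lt_padicValNat hm hj), Nat.div_div_eq_div_mul,
      pow_succ]

lemma two_mul_tl_add_one {m : ℕ} (hm : m ≠ 0) : 2 * tl m + 1 = m / 2 ^ padicValNat 2 m := by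
  obtain ⟨c, hc⟩ : 2 ^ padicValNat 2 m ∣ m := pow_padicValNat_dvd
  have hodd : ¬ 2 ∣ c := fun ⟨d, hd⟩ ↦
    pow_succ_padicValNat_not_dvd (p := 2) hm ⟨d, by rw [pow_succ, mul_assoc, ← hd, ← hc]⟩
  have hdiv : m / 2 ^ padicValNat 2 m = c :=
    Nat.div_eq_of_eq_mul_right (by positivity) hc
  rw [tl, hdiv]
  omega

lemma collatz_iterate_padicValNat {m : ℕ} (hm : m ≠ 0) :
    collatz^[padicValNat 2 m] m = 2 * tl m + 1 := by
  rw [collatz_iterate_of_le_padicValNat hm le_rfl, two_mul_tl_add_one hm]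

def syracuseSteps (n : ℕ) : ℕ := 2 + padicValNat 2 (3 * n + 2)

lemma collatz_iterate_syracuseSteps (n : ℕ) :
    collatz^[syracuseSteps n] (2 * n + 1) = 2 * syracuse n + 1 := by
  rw [syracuseSteps, add_comm, Function.iterate_add_apply, collatz_iterate_two_two_mul_add_one,
    collatz_iterate_padicValNat (by omega), syracuse]

lemma collatz_iterate_ne_one_of_lt_syracuseSteps {n j : ℕ} (hn : n ≠ 0)
    (hj : j < syracuseSteps n) : collatz^[j] (2 * n + 1) ≠ 1 := by
  match j with
  | 0 => simpa using hn
  | 1 => simp [collatz_two_mul_add_one]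
  | i + 2 =>
    have hi : i < padicValNat 2 (3 * n + 2) := by
      rw [syracuseSteps] at hj
      omega
    rw [Function.iterate_add_apply, collatz_iterate_two_two_mul_add_one,
      collatz_iterate_of_le_padicValNat (by omega) hi.le]
    intro h
    have := two_dvd_div_pow_of_lt_padicValNat (by omega) hi
    omega

lemma exists_syracuse_iterate_eq_zero_of_collatz_iterate_eq_one {k n : ℕ}
    (hk : collatz^[k] (2 * n + 1) = 1) : ∃ j, syracuse^[j] n = 0 := by
  induction k using Nat.strong_induction_on generalizing n with
  | _ k ih =>
    rcases eq_or_ne n 0 with rfl | hn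
    · exact ⟨0, rfl⟩
    have hrest := Function.iterate_sub_apply_of_forall_lt_ne
      (fun _ ↦ collatz_iterate_ne_one_of_lt_syracuseSteps hn) hk
    rw [collatz_iterate_syracuseSteps] at hrest
    have hk0 : k ≠ 0 := by
      rintro rfl
      exact hn (by simpa using hk)
    have hlt : k - syracuseSteps n < k := by
      have : 0 < syracuseSteps n := by simp [syracuseSteps]
      omega
    obtain ⟨j, hj⟩ := ih _ hlt hrest
    exact ⟨j + 1, hj⟩

lemma exists_collatz_iterate_eq_one_of_syracuse_iterate_eq_zero {j n : ℕ}
    (hj : syracuse^[j] n = 0) : ∃ k, collatz^[k] (2 * n + 1) = 1 := by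
  induction j generalizing n with
  | zero => exact ⟨0, by simp [show n = 0 from hj]⟩
  | succ j ih =>
    obtain ⟨k, hk⟩ := ih hj
    exact ⟨k + syracuseSteps n, by rwa [Function.iterate_add_apply, collatz_iterate_syracuseSteps]⟩

theorem collatz_iff_syracuse_terminates :
    (∀ x : ℕ, 1 ≤ x → ∃ k : ℕ, collatz^[k] x = 1) ↔
    (∀ n : ℕ, ∃ k : ℕ, syracuse^[k] n = 0) := by
  constructor
  · intro hcollatz n
    obtain ⟨k, hk⟩ := hcollatz (2 * n + 1) (by omega)
    exact exists_syracuse_iterate_eq_zero_of_collatz_iterate_eq_one hk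
  · intro hsyracuse x hx
    obtain ⟨j, hj⟩ := hsyracuse (tl x)
    obtain ⟨k, hk⟩ := exists_collatz_iterate_eq_one_of_syracuse_iterate_eq_zero hj
    refine ⟨k + padicValNat 2 x, ?_⟩
    rwa [Function.iterate_add_apply, collatz_iterate_padicValNat (by omega)]
end
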